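/- Let s : [0,1]×[0,1] → ℝ ∪ {+∞} be defined by s(u,v) = u·log(u/v) if u>0 and v>0, s(0,v)=0, and s(u,0)=+∞ for u>0. Let A, B be operators on a finite-dimensional complex Hilbert space H with 0 ≤ A ≤ I, 0 ≤ B ≤ I and ker B ⊆ ker A. Then the function ρ ↦ s(Tr[Aρ], Tr[Bρ]) is bounded and continuous on the set of density operators on H. -/

import Mathlib

open scoped Classical ComplexOrder

/-- The function `s(u,v)` of the paper: `s(u,v) = u·log₂(u/v)` for `u>0, v>0`,
`s(0,v) = 0`, and `s(u,0) = +∞` for `u>0`. -/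
noncomputable def sFun (u v : ℝ) : EReal :=
  if u ≤ 0 then 0
  else if v ≤ 0 then ⊤
  else ((u * Real.logb 2 (u / v) : ℝ) : EReal)

/-- A density operator (state) on the finite-dimensional Hilbert space `ℂⁿ`. -/
def IsState {n : ℕ} (ρ : Matrix (Fin n) (Fin n) ℂ) : Prop :=
  ρ.PosSemidef ∧ ρ.trace = 1

/-! Since `ker B ⊆ ker A` and `A ≤ 1`, there is `c > 0` with `A ≤ c B`, so on states the pair
`u = Tr[Aρ]`, `v = Tr[Bρ]` lies in the cone `0 ≤ u ≤ c v` and in `[0,1]²`. On that cone `s` is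
finite and equals `u log u - u log v`, which is continuous because `|u log v| ≤ |c| |v log v| → 0`
as `v → 0`; and `u - v ≤ u log (u / v) ≤ u (c - 1)` bounds it. -/

open Real

lemma sFun_eq_coe {u v : ℝ} (hu : 0 ≤ u) (huv : 0 < u → 0 < v) :
    sFun u v = ((u * logb 2 (u / v) : ℝ) : EReal) := by
  unfold sFun
  split_ifs with hu0 hv0
  · simp [le_antisymm hu0 hu]
  · exact absurd (huv (lt_of_not_ge hu0)) (not_lt.2 hv0)
  · rfl

lemma continuousOn_mul_log_snd (c : ℝ) :
    ContinuousOn (fun p : ℝ × ℝ => p.1 * log p.2) {p | 0 ≤ p.1 ∧ p.1 ≤ c * p.2} := by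
  rintro p ⟨hp0, hpc⟩
  by_cases hp2 : p.2 = 0
  · have hp1 : p.1 = 0 := le_antisymm (by simpa [hp2] using hpc) hp0
    have hbound : ∀ q ∈ {p : ℝ × ℝ | 0 ≤ p.1 ∧ p.1 ≤ c * p.2},
        ‖q.1 * log q.2‖ ≤ |c| * |q.2 * log q.2| := by
      rintro q ⟨hq0, hqc⟩
      calc ‖q.1 * log q.2‖ = q.1 * |log q.2| := by rw [norm_mul, norm_of_nonneg hq0, norm_eq_abs]
        _ ≤ |c * q.2| * |log q.2| :=
          mul_le_mul_of_nonneg_right (hqc.trans (le_abs_self _)) (abs_nonneg _)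
        _ = |c| * |q.2 * log q.2| := by rw [abs_mul, abs_mul, mul_assoc]
    have hlim : Filter.Tendsto (fun q : ℝ × ℝ => |c| * |q.2 * log q.2|)
        (nhdsWithin p {p | 0 ≤ p.1 ∧ p.1 ≤ c * p.2}) (nhds 0) := by
      have := ((continuous_mul_log.comp continuous_snd).abs.const_mul |c|).tendsto p
      simpa [hp2] using this.mono_left nhdsWithin_le_nhds
    simpa [ContinuousWithinAt, hp1] using
      squeeze_zero_norm' (eventually_nhdsWithin_of_forall hbound) hlim
  · exact (continuousAt_fst.mul ((continuousAt_log hp2).comp continuousAt_snd)).continuousWithinAt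

lemma continuousOn_mul_log_div (c : ℝ) :
    ContinuousOn (fun p : ℝ × ℝ => p.1 * log (p.1 / p.2)) {p | 0 ≤ p.1 ∧ p.1 ≤ c * p.2} := by
  refine ((continuous_mul_log.comp continuous_fst).continuousOn.sub
    (continuousOn_mul_log_snd c)).congr ?_
  rintro p ⟨hp0, hpc⟩
  rcases hp0.eq_or_lt with hp1 | hp1
  · simp [← hp1]
  · have hp2 : p.2 ≠ 0 := by rintro h; simp [h] at hpc; linarith
    simp [log_div hp1.ne' hp2, mul_sub]

lemma abs_mul_log_div_le {u v c : ℝ} (hc : 0 ≤ c) (hu0 : 0 ≤ u) (hu1 : u ≤ 1) (hv1 : v ≤ 1)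
    (huv : u ≤ c * v) : |u * log (u / v)| ≤ c + 1 := by
  rcases hu0.eq_or_lt with rfl | hu
  · simpa using by linarith
  have hv : 0 < v := pos_of_mul_pos_right (hu.trans_le huv) hc
  have hlow := one_sub_inv_le_log_of_pos (div_pos hu hv)
  have hup := log_le_sub_one_of_pos (div_pos hu hv)
  rw [inv_div] at hlow
  have hlow' : u - v ≤ u * log (u / v) := by
    have := mul_le_mul_of_nonneg_left hlow hu.le
    rwa [mul_sub, mul_one, mul_div_cancel₀ _ hu.ne'] at this
  have hup' : u * log (u / v) ≤ u * (c - 1) := by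
    refine mul_le_mul_of_nonneg_left (hup.trans ?_) hu.le
    linarith [(div_le_iff₀ hv).2 huv]
  rw [abs_le]
  constructor <;> nlinarith

lemma continuousOn_mul_logb_div (b c : ℝ) :
    ContinuousOn (fun p : ℝ × ℝ => p.1 * logb b (p.1 / p.2)) {p | 0 ≤ p.1 ∧ p.1 ≤ c * p.2} := by
  simpa only [logb, mul_div_assoc] using (continuousOn_mul_log_div c).div_const (log b)

lemma abs_mul_logb_div_le {b u v c : ℝ} (hb : 1 < b) (hc : 0 ≤ c) (hu0 : 0 ≤ u) (hu1 : u ≤ 1)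
    (hv1 : v ≤ 1) (huv : u ≤ c * v) : |u * logb b (u / v)| ≤ (c + 1) / log b := by
  rw [logb, ← mul_div_assoc, abs_div, abs_of_pos (log_pos hb)]
  exact div_le_div_of_nonneg_right (abs_mul_log_div_le hc hu0 hu1 hv1 huv) (log_pos hb).le

open scoped MatrixOrder

lemma Set.Finite.exists_pos_le_of_pos {s : Set ℝ} (hs : s.Finite) :
    ∃ ε > 0, ∀ t ∈ s, 0 < t → ε ≤ t := by
  rcases (s ∩ Set.Ioi 0).eq_empty_or_nonempty with hS | hS
  · exact ⟨1, one_pos, fun t ht ht0 => (Set.eq_empty_iff_forall_notMem.1 hS t ⟨ht, ht0⟩).elim⟩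
  · obtain ⟨ε, ⟨-, hε⟩, hmin⟩ := (s ∩ Set.Ioi 0).exists_min_image id (hs.inter_of_left _) hS
    exact ⟨ε, hε, fun t ht ht0 => hmin t ⟨ht, ht0⟩⟩

namespace Matrix

variable {n 𝕜 : Type*} [Fintype n] [DecidableEq n] [RCLike 𝕜]

lemma mul_eq_zero_of_ker_le {A B M : Matrix n n 𝕜}
    (hker : ∀ v, B *ᵥ v = 0 → A *ᵥ v = 0) (hBM : B * M = 0) : A * M = 0 :=
  ext_of_mulVec_single fun i => by
    rw [← mulVec_mulVec, hker _ (by rw [mulVec_mulVec, hBM, zero_mulVec]), zero_mulVec]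

/-- Both sides are squeezed against the support projection `p` of `B`: `A = p A p ≤ p` because
`A` vanishes on `ker B`, and `ε p ≤ B` for the least positive eigenvalue `ε` of `B`. -/
lemma exists_le_smul_of_ker_le {A B : Matrix n n 𝕜} (hA1 : A ≤ 1) (hB : 0 ≤ B)
    (hker : ∀ v, B *ᵥ v = 0 → A *ᵥ v = 0) : ∃ c : ℝ, 0 < c ∧ A ≤ c • B := by
  obtain ⟨ε, hε, hεB⟩ := B.finite_real_spectrum.exists_pos_le_of_pos
  have hA_sa : IsSelfAdjoint A := by
    simpa using (IsSelfAdjoint.one (Matrix n n 𝕜)).sub (.of_nonneg (sub_nonneg.2 hA1))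
  have hcont (f : ℝ → ℝ) : ContinuousOn f (spectrum ℝ B) := B.finite_real_spectrum.continuousOn f
  set p := cfc (fun t : ℝ => if t = 0 then 0 else 1) B
  have hp_sa : IsSelfAdjoint p := cfc_predicate _ B
  have hp_idem : p * p = p := by
    rw [← cfc_mul _ _ B (hcont _) (hcont _)]
    congr 1; funext t; split_ifs <;> simp
  have hBp : B * p = B := by
    calc B * p = cfc id B * p := by rw [cfc_id ℝ B (.of_nonneg hB)]
      _ = cfc (fun t : ℝ => t * if t = 0 then 0 else 1) B :=
          (cfc_mul _ _ B (hcont _) (hcont _)).symm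
      _ = cfc id B := by congr 1; funext t; split_ifs <;> simp_all
      _ = B := cfc_id ℝ B (.of_nonneg hB)
  have hAp : A * p = A := by
    have := mul_eq_zero_of_ker_le hker (M := 1 - p) (by rw [mul_sub, mul_one, hBp, sub_self])
    rwa [mul_sub, mul_one, sub_eq_zero, eq_comm] at this
  have hpA : p * A = A := by
    simpa [hA_sa.star_eq, hp_sa.star_eq] using congrArg star hAp
  have hpB : p ≤ ε⁻¹ • B := by
    calc p ≤ cfc (fun t => ε⁻¹ * id t) B := by
          refine cfc_mono (fun t ht => ?_) (hcont _) (hcont _)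
          split_ifs with h0
          · simp [h0]
          · exact (le_inv_mul_iff₀ hε).2
              (by simpa using hεB t ht ((spectrum_nonneg_of_nonneg hB ht).lt_of_ne' h0))
      _ = ε⁻¹ • B := by rw [cfc_const_mul _ _ B (hcont _), cfc_id ℝ B (.of_nonneg hB)]
  refine ⟨ε⁻¹, inv_pos.2 hε, ?_⟩
  calc A = star p * A * p := by rw [hp_sa.star_eq, hpA, hAp]
    _ ≤ star p * 1 * p := star_left_conjugate_le_conjugate hA1 p
    _ = p := by rw [mul_one, hp_sa.star_eq, hp_idem]
    _ ≤ ε⁻¹ • B := hpB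

lemma trace_mul_nonneg {ρ M : Matrix n n 𝕜} (hρ : 0 ≤ ρ) (hM : 0 ≤ M) : 0 ≤ (ρ * M).trace := by
  set s := CFC.sqrt ρ
  have hs : star s = s := (IsSelfAdjoint.of_nonneg (CFC.sqrt_nonneg ρ)).star_eq
  calc 0 ≤ (star s * M * s).trace :=
        (nonneg_iff_posSemidef.1 (star_left_conjugate_nonneg hM s)).trace_nonneg
    _ = (ρ * M).trace := by rw [hs, trace_mul_cycle, CFC.sqrt_mul_sqrt_self ρ hρ]

lemma trace_mul_mono {ρ M N : Matrix n n 𝕜} (hρ : 0 ≤ ρ) (h : M ≤ N) :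
    (ρ * M).trace ≤ (ρ * N).trace := by
  simpa [mul_sub, trace_sub] using trace_mul_nonneg hρ (sub_nonneg.2 h)

end Matrix

lemma IsState.re_trace_mul_mono {n : ℕ} {ρ M N : Matrix (Fin n) (Fin n) ℂ} (hρ : IsState ρ)
    (h : M ≤ N) : (ρ * M).trace.re ≤ (ρ * N).trace.re :=
  (Complex.le_def.1 (Matrix.trace_mul_mono (Matrix.nonneg_iff_posSemidef.2 hρ.1) h)).1

/-- If `0 ≤ A ≤ I`, `0 ≤ B ≤ I` and `ker B ⊆ ker A`, then
`ρ ↦ s(Tr[Aρ], Tr[Bρ])` is bounded and continuous on the set of density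
operators. -/
theorem stmt3 {n : ℕ} (A B : Matrix (Fin n) (Fin n) ℂ)
    (hA : A.PosSemidef) (hA1 : (1 - A).PosSemidef)
    (hB : B.PosSemidef) (hB1 : (1 - B).PosSemidef)
    (hker : ∀ v : Fin n → ℂ, B.mulVec v = 0 → A.mulVec v = 0) :
    (∃ C : ℝ, ∀ ρ : Matrix (Fin n) (Fin n) ℂ, IsState ρ →
        (-(C : EReal) ≤ sFun ((ρ * A).trace.re) ((ρ * B).trace.re) ∧
          sFun ((ρ * A).trace.re) ((ρ * B).trace.re) ≤ (C : EReal))) ∧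
      ContinuousOn
        (fun ρ : Matrix (Fin n) (Fin n) ℂ =>
          sFun ((ρ * A).trace.re) ((ρ * B).trace.re))
        {ρ : Matrix (Fin n) (Fin n) ℂ | IsState ρ} := by
  obtain ⟨c, hc, hAB⟩ :=
    Matrix.exists_le_smul_of_ker_le (Matrix.le_iff.2 hA1) (Matrix.nonneg_iff_posSemidef.2 hB) hker
  have hre (ρ : Matrix (Fin n) (Fin n) ℂ) (M : Matrix (Fin n) (Fin n) ℂ) :
      (ρ * (c • M)).trace.re = c * (ρ * M).trace.re := by
    simp [Matrix.trace_smul]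
  set f := fun ρ : Matrix (Fin n) (Fin n) ℂ => ((ρ * A).trace.re, (ρ * B).trace.re)
  have hcone : ∀ ρ, IsState ρ → 0 ≤ (f ρ).1 ∧ (f ρ).1 ≤ c * (f ρ).2 := fun ρ hρ =>
    ⟨by simpa using hρ.re_trace_mul_mono (Matrix.nonneg_iff_posSemidef.2 hA),
      hre ρ B ▸ hρ.re_trace_mul_mono hAB⟩
  have hle_one : ∀ ρ, IsState ρ → (f ρ).1 ≤ 1 ∧ (f ρ).2 ≤ 1 := fun ρ hρ => by
    simpa [hρ.2] using And.intro (hρ.re_trace_mul_mono (Matrix.le_iff.2 hA1))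
      (hρ.re_trace_mul_mono (Matrix.le_iff.2 hB1))
  have hs : ∀ ρ, IsState ρ →
      sFun (f ρ).1 (f ρ).2 = (((f ρ).1 * logb 2 ((f ρ).1 / (f ρ).2) : ℝ) : EReal) :=
    fun ρ hρ => sFun_eq_coe (hcone ρ hρ).1
      fun hu => pos_of_mul_pos_right (hu.trans_le (hcone ρ hρ).2) hc.le
  have hf : Continuous f := by fun_prop
  refine ⟨⟨(c + 1) / log 2, fun ρ hρ => ?_⟩, ?_⟩
  · have h := abs_le.1 (abs_mul_logb_div_le one_lt_two hc.le (hcone ρ hρ).1 (hle_one ρ hρ).1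
      (hle_one ρ hρ).2 (hcone ρ hρ).2)
    rw [hs ρ hρ, ← EReal.coe_neg]
    exact ⟨EReal.coe_le_coe_iff.2 h.1, EReal.coe_le_coe_iff.2 h.2⟩
  · exact (continuous_coe_real_ereal.comp_continuousOn
      ((continuousOn_mul_logb_div 2 c).comp hf.continuousOn hcone)).congr hs
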